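/- For any r ∈ ℕ and z ∈ [−1,0], the function f(x) := (x − z)₊^r · cos(2π·ln|x − z|) (with f(x) := 0 for x ≤ z) belongs to W^r[−1,1] (i.e., f^(r−1) is absolutely continuous and f^(r) is essentially bounded), and for every polynomial P, limsup_{x→z} |f(x) − P(x)| / |x − z|^r ≥ 1. -/

import Mathlib

open Set

/-- The function `f(x) = (x−z)₊^r · cos(2π ln|x−z|)` (equal to `0` for `x ≤ z`). -/
noncomputable def stmt6f (r : ℕ) (z : ℝ) : ℝ → ℝ :=
  fun x => (max (x - z) 0) ^ r * Real.cos (2 * Real.pi * Real.log |x - z|)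

/-!
Write `g_{m,a,b}(x) = (x−z)₊^m (a cos(2π ln|x−z|) + b sin(2π ln|x−z|))`, so that `f = g_{r,1,0}`.
For `m ≥ 2` the derivative of `g_{m,a,b}` is again of this form, `g_{m−1,a',b'}`, also at `x = z`
where `g_{m,a,b}` vanishes to order `m`; hence `f^(r−1) = g_{1,a,b}`, which is Lipschitz because
its derivative off `z` is bounded. On the other hand `f(z + e^{−n}) = e^{−nr}` and
`f(z + e^{−n−1/2}) = −e^{−(n+1/2)r}`, while a polynomial has constant sign on some `(z, z + ε)`,
so it cannot stay within `(1 − e)|x − z|^r` of `f` at both kinds of points.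
-/

open Real Filter Topology Asymptotics

noncomputable def oscTruncPow (z : ℝ) (m : ℕ) (a b : ℝ) (x : ℝ) : ℝ :=
  max (x - z) 0 ^ m * (a * cos (2 * π * log |x - z|) + b * sin (2 * π * log |x - z|))

namespace oscTruncPow

variable {z : ℝ} {m n : ℕ} {a b : ℝ}

theorem abs_apply_le (x : ℝ) : |oscTruncPow z m a b x| ≤ (|a| + |b|) * max (x - z) 0 ^ m := by
  have hosc : |a * cos (2 * π * log |x - z|) + b * sin (2 * π * log |x - z|)| ≤ |a| + |b| := by
    refine (abs_add_le _ _).trans (add_le_add ?_ ?_) <;> rw [abs_mul]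
    · exact mul_le_of_le_one_right (abs_nonneg a) (abs_cos_le_one _)
    · exact mul_le_of_le_one_right (abs_nonneg b) (abs_sin_le_one _)
  rw [oscTruncPow, abs_mul, abs_of_nonneg (by positivity), mul_comm]
  exact mul_le_mul_of_nonneg_right hosc (by positivity)

theorem eq_zero_of_le (hm : m ≠ 0) {x : ℝ} (hx : x ≤ z) : oscTruncPow z m a b x = 0 := by
  rw [oscTruncPow, max_eq_right (sub_nonpos.2 hx), zero_pow hm, zero_mul]

theorem hasDerivAt_of_lt {x : ℝ} (hx : z < x) :
    HasDerivAt (oscTruncPow z (n + 1) a b)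
      (oscTruncPow z n ((n + 1) * a + 2 * π * b) ((n + 1) * b - 2 * π * a) x) x := by
  have hxz : 0 < x - z := sub_pos.2 hx
  have hlog : HasDerivAt (fun y => 2 * π * log (y - z)) (2 * π * (x - z)⁻¹) x :=
    (((hasDerivAt_id x).sub_const z).log hxz.ne').const_mul (2 * π) |>.congr_deriv (by simp)
  have hmain := (((hasDerivAt_id x).sub_const z).pow (n + 1)).mul
    (((hlog.cos).const_mul a).add ((hlog.sin).const_mul b))
  have heq : (fun y => (y - z) ^ (n + 1) *
      (a * cos (2 * π * log (y - z)) + b * sin (2 * π * log (y - z))))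
      =ᶠ[𝓝 x] oscTruncPow z (n + 1) a b := by
    filter_upwards [eventually_gt_nhds hx] with y hy
    rw [oscTruncPow, max_eq_left (sub_pos.2 hy).le, abs_of_pos (sub_pos.2 hy)]
  refine (hmain.congr_of_eventuallyEq heq.symm).congr_deriv ?_
  simp only [oscTruncPow, max_eq_left hxz.le, abs_of_pos hxz, Pi.add_apply, Pi.pow_apply, id_eq,
    Nat.add_sub_cancel, mul_one]
  field_simp
  push_cast
  ring

theorem hasDerivAt_zero_of_lt (hm : m ≠ 0) {x : ℝ} (hx : x < z) :
    HasDerivAt (oscTruncPow z m a b) 0 x :=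
  (hasDerivAt_const x 0).congr_of_eventuallyEq <| by
    filter_upwards [eventually_lt_nhds hx] with y hy using eq_zero_of_le hm hy.le

theorem hasDerivAt_zero_self (hm : 1 < m) : HasDerivAt (oscTruncPow z m a b) 0 z := by
  have hbound : oscTruncPow z m a b =O[𝓝 z] fun x => ‖x - z‖ ^ m := by
    refine IsBigO.of_bound (|a| + |b|) (Eventually.of_forall fun x => ?_)
    rw [Real.norm_eq_abs, norm_pow, norm_norm]
    exact (abs_apply_le x).trans (by gcongr; exact max_le (le_abs_self _) (abs_nonneg _))
  simpa [hasDerivAt_iff_isLittleO, eq_zero_of_le (by omega : m ≠ 0) le_rfl]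
    using hbound.trans_isLittleO (isLittleO_pow_sub_sub z hm)

theorem hasDerivAt (hn : n ≠ 0) (x : ℝ) :
    HasDerivAt (oscTruncPow z (n + 1) a b)
      (oscTruncPow z n ((n + 1) * a + 2 * π * b) ((n + 1) * b - 2 * π * a) x) x := by
  rcases lt_trichotomy x z with hx | rfl | hx
  · rw [eq_zero_of_le hn hx.le]
    exact hasDerivAt_zero_of_lt n.succ_ne_zero hx
  · rw [eq_zero_of_le hn le_rfl]
    exact hasDerivAt_zero_self (by omega)
  · exact hasDerivAt_of_lt hx

theorem exists_lipschitzWith_one : ∃ C, LipschitzWith C (oscTruncPow z 1 a b) := by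
  set a' := a + 2 * π * b
  set b' := b - 2 * π * a
  have hright : ∀ x y, z < x → z < y →
      dist (oscTruncPow z 1 a b x) (oscTruncPow z 1 a b y) ≤ (|a'| + |b'|) * dist x y := by
    intro x y hx hy
    have hderiv : ∀ t ∈ Ioi z, HasDerivWithinAt (oscTruncPow z 1 a b)
        (oscTruncPow z 0 a' b' t) (Ioi z) t := fun t ht => by
      simpa [a', b'] using (hasDerivAt_of_lt (n := 0) (a := a) (b := b) ht).hasDerivWithinAt
    have hbound : ∀ t ∈ Ioi z, ‖oscTruncPow z 0 a' b' t‖ ≤ |a'| + |b'| := fun t _ => by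
      simpa using abs_apply_le (z := z) (m := 0) (a := a') (b := b') t
    rw [dist_eq_norm, dist_eq_norm]
    exact (convex_Ioi z).norm_image_sub_le_of_norm_hasDerivWithin_le hderiv hbound hy hx
  have hleft : ∀ x y, x ≤ z →
      dist (oscTruncPow z 1 a b x) (oscTruncPow z 1 a b y) ≤ (|a| + |b|) * dist x y := by
    intro x y hx
    rw [eq_zero_of_le one_ne_zero hx, dist_zero_left, Real.norm_eq_abs, Real.dist_eq, abs_sub_comm]
    have hyx : max (y - z) 0 ≤ |y - x| := max_le (by linarith [le_abs_self (y - x)]) (abs_nonneg _)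
    exact (abs_apply_le y).trans (by rw [pow_one]; gcongr)
  refine ⟨(max (|a| + |b|) (|a'| + |b'|)).toNNReal, LipschitzWith.of_dist_le_mul fun x y => ?_⟩
  rw [Real.coe_toNNReal _ (le_max_of_le_left (by positivity))]
  rcases le_or_gt x z with hx | hx
  · exact (hleft x y hx).trans (by gcongr; exact le_max_left _ _)
  rcases le_or_gt y z with hy | hy
  · rw [dist_comm, dist_comm x]
    exact (hleft y x hy).trans (by gcongr; exact le_max_left _ _)
  · exact (hright x y hx hy).trans (by gcongr; exact le_max_right _ _)

theorem continuous (hm : m ≠ 0) : Continuous (oscTruncPow z m a b) := by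
  obtain _ | _ | n := m
  · exact absurd rfl hm
  · exact exists_lipschitzWith_one.choose_spec.continuous
  · exact continuous_iff_continuousAt.2 fun x => (hasDerivAt n.succ_ne_zero x).continuousAt

theorem deriv_eq (hn : n ≠ 0) :
    deriv (oscTruncPow z (n + 1) a b)
      = oscTruncPow z n ((n + 1) * a + 2 * π * b) ((n + 1) * b - 2 * π * a) :=
  funext fun x => (hasDerivAt hn x).deriv

theorem contDiff {k : ℕ} (hk : k < m) : ContDiff ℝ k (oscTruncPow z m a b) := by
  induction k generalizing m a b with
  | zero => exact contDiff_zero.2 (continuous (by omega))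
  | succ k ih =>
    obtain ⟨n, rfl⟩ : ∃ n, m = n + 1 := ⟨m - 1, by omega⟩
    rw [Nat.cast_succ, contDiff_succ_iff_deriv, deriv_eq (by omega)]
    exact ⟨fun x => (hasDerivAt (by omega) x).differentiableAt, by simp, ih (by omega)⟩

theorem exists_iteratedDeriv_eq {k : ℕ} (hk : k < m) :
    ∃ a' b', iteratedDeriv k (oscTruncPow z m a b) = oscTruncPow z (m - k) a' b' := by
  induction k generalizing m a b with
  | zero => exact ⟨a, b, rfl⟩
  | succ k ih =>
    obtain ⟨n, rfl⟩ : ∃ n, m = n + 1 := ⟨m - 1, by omega⟩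
    rw [iteratedDeriv_succ', deriv_eq (by omega)]
    exact Nat.add_sub_add_right n 1 k ▸ ih (by omega)

end oscTruncPow

theorem eventually_pos_or_neg_nhdsGT {f : ℝ → ℝ} {z : ℝ} (hf : Continuous f)
    (hne : ∀ᶠ x in 𝓝[>] z, f x ≠ 0) :
    (∀ᶠ x in 𝓝[>] z, 0 < f x) ∨ ∀ᶠ x in 𝓝[>] z, f x < 0 := by
  obtain ⟨c, hzc, hc⟩ := (nhdsGT_basis z).eventually_iff.1 hne
  by_contra! hsign
  obtain ⟨u, hu, hfu⟩ := (nhdsGT_basis z).frequently_iff.1 hsign.1 c hzc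
  obtain ⟨v, hv, hfv⟩ := (nhdsGT_basis z).frequently_iff.1 hsign.2 c hzc
  obtain ⟨w, hw, hfw⟩ := intermediate_value_uIcc hf.continuousOn (mem_uIcc.2 (Or.inl ⟨hfu, hfv⟩))
  exact hc (ordConnected_Ioo.uIcc_subset hu hv hw) hfw

theorem Polynomial.eventually_nonneg_or_nonpos_nhdsGT (P : Polynomial ℝ) (z : ℝ) :
    (∀ᶠ x in 𝓝[>] z, 0 ≤ P.eval x) ∨ ∀ᶠ x in 𝓝[>] z, P.eval x ≤ 0 := by
  rcases (AnalyticOnNhd.eval_polynomial P z trivial).eventually_eq_zero_or_eventually_ne_zero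
    with hzero | hne
  · exact .inl <| (hzero.filter_mono nhdsWithin_le_nhds).mono fun x hx => hx.ge
  · have hne' : ∀ᶠ x in 𝓝[>] z, P.eval x ≠ 0 := nhdsWithin_mono _ (fun x hx => ne_of_gt hx) hne
    exact (eventually_pos_or_neg_nhdsGT P.continuous hne').imp
      (·.mono fun _ => le_of_lt) (·.mono fun _ => le_of_lt)

theorem tendsto_add_exp_neg_nhdsGT {α : Type*} {l : Filter α} {s : α → ℝ}
    (hs : Tendsto s l atTop) (z : ℝ) : Tendsto (fun i => z + exp (-s i)) l (𝓝[>] z) := by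
  refine tendsto_nhdsWithin_iff.2 ⟨?_, .of_forall fun i => lt_add_of_pos_right z (exp_pos _)⟩
  simpa using (tendsto_exp_neg_atTop_nhds_zero.comp hs).const_add z

theorem stmt6f_eq_oscTruncPow (r : ℕ) (z : ℝ) : stmt6f r z = oscTruncPow z r 1 0 := by
  funext x
  simp [stmt6f, oscTruncPow]

theorem stmt6f_add_exp (r : ℕ) (z s : ℝ) :
    stmt6f r z (z + exp s) = exp s ^ r * cos (2 * π * s) := by
  simp [stmt6f, (exp_pos s).le]

theorem stmt6f_add_exp_neg_nat (r n : ℕ) (z : ℝ) :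
    stmt6f r z (z + exp (-n)) = exp (-n) ^ r := by
  rw [stmt6f_add_exp, mul_neg, cos_neg, mul_comm (2 * π), cos_nat_mul_two_pi, mul_one]

theorem stmt6f_add_exp_neg_nat_add_half (r n : ℕ) (z : ℝ) :
    stmt6f r z (z + exp (-(n + 1 / 2))) = -exp (-(n + 1 / 2)) ^ r := by
  rw [stmt6f_add_exp, mul_neg, cos_neg, show 2 * π * (n + 1 / 2) = n * (2 * π) + π by ring,
    cos_nat_mul_two_pi_add_pi, mul_neg_one]

theorem stmt6f_approx (r : ℕ) (z : ℝ) (hz : z ∈ Icc (-1 : ℝ) 0) (P : Polynomial ℝ) (e δ : ℝ)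
    (he : 0 < e) (hδ : 0 < δ) :
    ∃ x ∈ Icc (-1 : ℝ) 1, x ≠ z ∧ |x - z| < δ ∧
      (1 - e) * |x - z| ^ r < |stmt6f r z x - P.eval x| := by
  by_contra! hfar
  have hnear : ∀ᶠ x in 𝓝[>] z, |stmt6f r z x - P.eval x| ≤ (1 - e) * (x - z) ^ r := by
    filter_upwards [Ioo_mem_nhdsGT (show z < min (z + δ) 1 by simp [hδ]; linarith [hz.2])]
      with x ⟨hzx, hx⟩
    rw [lt_min_iff] at hx
    have hxz : |x - z| = x - z := abs_of_pos (sub_pos.2 hzx)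
    simpa [hxz] using hfar x ⟨by linarith [hz.1], hx.2.le⟩ hzx.ne' (by rw [hxz]; linarith)
  rcases P.eventually_nonneg_or_nonpos_nhdsGT z with hP | hP
  · have hseq := tendsto_add_exp_neg_nhdsGT
      (tendsto_atTop_add_const_right _ (1 / 2) tendsto_natCast_atTop_atTop) z
    obtain ⟨n, hPn, hn⟩ := (hseq.eventually (hP.and hnear)).exists
    rw [stmt6f_add_exp_neg_nat_add_half, add_sub_cancel_left] at hn
    have := pow_pos (exp_pos (-(n + 1 / 2 : ℝ))) r
    linarith [(abs_le.1 hn).1, mul_pos he this]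
  · have hseq := tendsto_add_exp_neg_nhdsGT tendsto_natCast_atTop_atTop z
    obtain ⟨n, hPn, hn⟩ := (hseq.eventually (hP.and hnear)).exists
    rw [stmt6f_add_exp_neg_nat, add_sub_cancel_left] at hn
    have := pow_pos (exp_pos (-n : ℝ)) r
    linarith [(abs_le.1 hn).2, mul_pos he this]

theorem stmt6 (r : ℕ) (hr : 1 ≤ r) (z : ℝ) (hz : z ∈ Icc (-1:ℝ) 0) :
    ContDiffOn ℝ (r - 1) (stmt6f r z) (Icc (-1) 1) ∧
    (∃ C : NNReal,
      LipschitzOnWith C (iteratedDerivWithin (r - 1) (stmt6f r z) (Icc (-1) 1))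
        (Icc (-1) 1)) ∧
    (∀ P : Polynomial ℝ, ∀ e δ : ℝ, 0 < e → 0 < δ → ∃ x ∈ Icc (-1:ℝ) 1,
      x ≠ z ∧ |x - z| < δ ∧ (1 - e) * |x - z| ^ r < |stmt6f r z x - P.eval x|) := by
  have hsmooth : ContDiff ℝ (r - 1 : ℕ) (stmt6f r z) :=
    stmt6f_eq_oscTruncPow r z ▸ oscTruncPow.contDiff (by omega)
  refine ⟨?_, ?_, stmt6f_approx r z hz⟩
  · exact_mod_cast hsmooth.contDiffOn
  · obtain ⟨a, b, hderiv⟩ := oscTruncPow.exists_iteratedDeriv_eq (z := z) (a := 1) (b := 0)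
      (show r - 1 < r by omega)
    obtain ⟨C, hC⟩ := oscTruncPow.exists_lipschitzWith_one (z := z) (a := a) (b := b)
    refine ⟨C, fun x hx y hy => ?_⟩
    have hIcc : UniqueDiffOn ℝ (Icc (-1 : ℝ) 1) := uniqueDiffOn_Icc (by norm_num)
    rw [iteratedDerivWithin_eq_iteratedDeriv hIcc hsmooth.contDiffAt hx,
      iteratedDerivWithin_eq_iteratedDeriv hIcc hsmooth.contDiffAt hy, stmt6f_eq_oscTruncPow,
      hderiv, show r - (r - 1) = 1 by omega]
    exact hC.edist_le_mul x y
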